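/- Let V be a real inner product space, W ⊆ V a subspace admitting an orthogonal projection onto it, p, q positive integers, and J : V → V a symmetric linear map with J² = pJ + qI. Then for every X ∈ W: T²X + t(NX) = pTX + qX and N(TX) + n(NX) = pNX. -/

import Mathlib

open scoped RealInnerProductSpace

/-- The tangential part of `J X` with respect to the subspace `W`:
`T X := P_W (J X)` (also used for `t U := P_W (J U)` when `U ∈ Wᗮ`). -/
noncomputable def tang {V : Type*} [NormedAddCommGroup V] [InnerProductSpace ℝ V]
    (W : Submodule ℝ V) [Submodule.HasOrthogonalProjection W] (J : V →ₗ[ℝ] V) (X : V) : V :=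
  (W.orthogonalProjectionOnto (J X) : V)

/-- The normal part of `J X` with respect to the subspace `W`:
`N X := J X − T X` (also used for `n U := J U − t U` when `U ∈ Wᗮ`). -/
noncomputable def norm' {V : Type*} [NormedAddCommGroup V] [InnerProductSpace ℝ V]
    (W : Submodule ℝ V) [Submodule.HasOrthogonalProjection W] (J : V →ₗ[ℝ] V) (X : V) : V :=
  J X - tang W J X


section InducedStructure

variable {V : Type*} [NormedAddCommGroup V] [InnerProductSpace ℝ V]
  (W : Submodule ℝ V) [Submodule.HasOrthogonalProjection W] (J : V →ₗ[ℝ] V)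

theorem tang_add (x y : V) : tang W J (x + y) = tang W J x + tang W J y := by
  simp only [tang, map_add, Submodule.coe_add]

theorem norm'_add (x y : V) : norm' W J (x + y) = norm' W J x + norm' W J y := by
  simp only [norm', tang_add, map_add]
  abel

theorem tang_add_norm' (x : V) : tang W J x + norm' W J x = J x :=
  add_sub_cancel _ _

theorem tang_apply_of_sq_eq {a b : ℝ} (hJ2 : ∀ v : V, J (J v) = a • J v + b • v)
    {X : V} (hX : X ∈ W) : tang W J (J X) = a • tang W J X + b • X := by
  simp only [tang, hJ2, map_add, map_smul, Submodule.coe_add, Submodule.coe_smul,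
    ← W.starProjection_apply, W.starProjection_eq_self_iff.mpr hX]

theorem norm'_apply_of_sq_eq {a b : ℝ} (hJ2 : ∀ v : V, J (J v) = a • J v + b • v)
    {X : V} (hX : X ∈ W) : norm' W J (J X) = a • norm' W J X := by
  rw [norm', norm', tang_apply_of_sq_eq W J hJ2 hX, hJ2, smul_sub]
  abel

end InducedStructure

theorem induced_structure_identities_tangent_general {V : Type*} [NormedAddCommGroup V]
    [InnerProductSpace ℝ V]
    (W : Submodule ℝ V) [Submodule.HasOrthogonalProjection W]
    (p q : ℕ)
    (J : V →ₗ[ℝ] V)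
    (hJ2 : ∀ v : V, J (J v) = (p : ℝ) • J v + (q : ℝ) • v) :
    ∀ X ∈ W,
      tang W J (tang W J X) + tang W J (norm' W J X) = (p : ℝ) • tang W J X + (q : ℝ) • X ∧
      norm' W J (tang W J X) + norm' W J (norm' W J X) = (p : ℝ) • norm' W J X := by
  intro X hX
  rw [← tang_add, ← norm'_add, tang_add_norm']
  exact ⟨tang_apply_of_sq_eq W J hJ2 hX, norm'_apply_of_sq_eq W J hJ2 hX⟩

/-- For a symmetric metallic structure `J` (`J² = pJ + qI`) and a subspace `W`
with an orthogonal projection, for every `X ∈ W`: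
`T²X + t(NX) = pTX + qX` and `N(TX) + n(NX) = pNX`. -/
theorem induced_structure_identities_tangent {V : Type*} [NormedAddCommGroup V]
    [InnerProductSpace ℝ V]
    (W : Submodule ℝ V) [Submodule.HasOrthogonalProjection W]
    (p q : ℕ) (hp : 0 < p) (hq : 0 < q)
    (J : V →ₗ[ℝ] V)
    (hJsym : ∀ x y : V, ⟪J x, y⟫ = ⟪x, J y⟫)
    (hJ2 : ∀ v : V, J (J v) = (p : ℝ) • J v + (q : ℝ) • v) :
    ∀ X ∈ W,
      tang W J (tang W J X) + tang W J (norm' W J X) = (p : ℝ) • tang W J X + (q : ℝ) • X ∧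
      norm' W J (tang W J X) + norm' W J (norm' W J X) = (p : ℝ) • norm' W J X :=
  induced_structure_identities_tangent_general W p q J hJ2
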